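/- Upper bound of the energy by the second-order objective, obstacle potential case (Proposition 3.2, first part): assume γ ∈ L¹(G) is even and positive semidefinite and that ξτ < 2. Then E(u) ≤ J²(u) for every u ∈ K = {w ∈ L²(G) : |w| ≤ 1 a.e.}. -/

import Mathlib

open MeasureTheory

noncomputable section

/-- The `n`-dimensional torus: product of circles `ℝ/(Lᵢℤ)`. -/
abbrev Torus (n : ℕ) (L : Fin n → ℝ) := Π i : Fin n, AddCircle (L i)

variable {n : ℕ} {L : Fin n → ℝ} [∀ i, Fact (0 < L i)]

/-- The `L²` inner product `(u,v) = ∫ u v`. -/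
def ip (u v : Torus n L → ℝ) : ℝ := ∫ x, u x * v x

/-- The convolution `(γ*u)(x) = ∫ γ(x-y) u(y) dy`. -/
def conv (γ u : Torus n L → ℝ) : Torus n L → ℝ := fun x => ∫ y, γ (x - y) * u y

/-- `g(u) = (ξ/2)‖u‖² + c`. -/
def gfun (ξ c : ℝ) (u : Torus n L → ℝ) : ℝ := ξ / 2 * ip u u + c

/-- `f(u) = −(1/2)(γ*u, u)`. -/
def ffun (γ : Torus n L → ℝ) (u : Torus n L → ℝ) : ℝ := -(1 / 2) * ip (conv γ u) u

/-- Energy for the obstacle potential: `E(u) = g(u) + f(u)`. -/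
def energyObs (γ : Torus n L → ℝ) (ξ c : ℝ) (u : Torus n L → ℝ) : ℝ :=
  gfun ξ c u + ffun γ u

/-- Second-order implicit objective with previous iterate `v`:
`J²(u) = (1/(2τ))‖u−v‖² + (1/2)(g(v)+g(u)) + (1/2)(f(v)+f(u)) − (1/2)(γ*v, u−v) + (ξ/2)(v, u−v)`. -/
def objJ2 (γ : Torus n L → ℝ) (τ ξ c : ℝ) (v u : Torus n L → ℝ) : ℝ :=
  1 / (2 * τ) * ip (u - v) (u - v) + 1 / 2 * (gfun ξ c v + gfun ξ c u)
    + 1 / 2 * (ffun γ v + ffun γ u) - 1 / 2 * ip (conv γ v) (u - v)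
    + ξ / 2 * ip v (u - v)

/-- The admissible set for the obstacle potential: `K = {w ∈ L²(G) : |w| ≤ 1 a.e.}`. -/
def obstacleSet (n : ℕ) (L : Fin n → ℝ) [∀ i, Fact (0 < L i)] : Set (Torus n L → ℝ) :=
  {w | MemLp w 2 ∧ ∀ᵐ x, |w x| ≤ 1}


/-- The symmetric bilinear double-integral form. -/
def Sform (γ a b : Torus n L → ℝ) : ℝ :=
  ∫ p : Torus n L × Torus n L, γ (p.1 - p.2) * (a p.2 * b p.1)
    ∂((volume : Measure (Torus n L)).prod volume)

lemma torus_int_mul {a b : Torus n L → ℝ} {A B : ℝ}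
    (ha : AEStronglyMeasurable a volume) (hb : AEStronglyMeasurable b volume)
    (haA : ∀ᵐ x, |a x| ≤ A) (hbB : ∀ᵐ x, |b x| ≤ B) (hA : 0 ≤ A) :
    Integrable (fun x => a x * b x) := by
  refine (integrable_const (A * B)).mono' (ha.mul hb) ?_
  filter_upwards [haA, hbB] with x h1 h2
  calc ‖a x * b x‖ = |a x| * |b x| := by rw [Real.norm_eq_abs, abs_mul]
    _ ≤ A * B := mul_le_mul h1 h2 (abs_nonneg _) hA

lemma torus_gamma_prod_int (γ : Torus n L → ℝ) (hγ : Integrable γ) :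
    Integrable (fun p : Torus n L × Torus n L => γ (p.1 - p.2))
      ((volume : Measure (Torus n L)).prod volume) := by
  have h1 : Integrable (fun p : Torus n L × Torus n L => γ p.1)
      ((volume : Measure (Torus n L)).prod volume) := by
    simpa using hγ.mul_prod (integrable_const (1 : ℝ))
  have h2 := measurePreserving_sub_prod (volume : Measure (Torus n L)) volume
  exact (h2.integrable_comp h1.aestronglyMeasurable).mpr h1

lemma int_key (γ : Torus n L → ℝ) (hγ : Integrable γ) {a b : Torus n L → ℝ} {A B : ℝ}
    (ha : AEStronglyMeasurable a volume) (hb : AEStronglyMeasurable b volume)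
    (haA : ∀ᵐ x, |a x| ≤ A) (hbB : ∀ᵐ x, |b x| ≤ B) (hA : 0 ≤ A) :
    Integrable (fun p : Torus n L × Torus n L => γ (p.1 - p.2) * (a p.2 * b p.1))
      ((volume : Measure (Torus n L)).prod volume) := by
  have hg := torus_gamma_prod_int γ hγ
  have hab : AEStronglyMeasurable (fun p : Torus n L × Torus n L => a p.2 * b p.1)
      ((volume : Measure (Torus n L)).prod volume) := by
    have h1 : AEStronglyMeasurable (fun p : Torus n L × Torus n L => a p.2)
        ((volume : Measure (Torus n L)).prod volume) := ha.comp_snd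
    have h2 : AEStronglyMeasurable (fun p : Torus n L × Torus n L => b p.1)
        ((volume : Measure (Torus n L)).prod volume) := hb.comp_fst
    exact h1.mul h2
  have haA' : ∀ᵐ p ∂((volume : Measure (Torus n L)).prod volume), |a p.2| ≤ A :=
    MeasureTheory.Measure.quasiMeasurePreserving_snd.ae haA
  have hbB' : ∀ᵐ p ∂((volume : Measure (Torus n L)).prod volume), |b p.1| ≤ B :=
    (Measure.quasiMeasurePreserving_fst (μ := (volume : Measure (Torus n L)))
      (ν := (volume : Measure (Torus n L)))).ae hbB
  have hbound : ∀ᵐ p ∂((volume : Measure (Torus n L)).prod volume),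
      ‖a p.2 * b p.1‖ ≤ A * B := by
    filter_upwards [haA', hbB'] with p h1 h2
    calc ‖a p.2 * b p.1‖ = |a p.2| * |b p.1| := by rw [Real.norm_eq_abs, abs_mul]
      _ ≤ A * B := mul_le_mul h1 h2 (abs_nonneg _) hA
  have := hg.bdd_mul hab hbound
  exact this.congr (Filter.Eventually.of_forall fun p => by ring)

lemma ip_conv_eq (γ : Torus n L → ℝ) (hγ : Integrable γ) {a b : Torus n L → ℝ} {A B : ℝ}
    (ha : AEStronglyMeasurable a volume) (hb : AEStronglyMeasurable b volume)
    (haA : ∀ᵐ x, |a x| ≤ A) (hbB : ∀ᵐ x, |b x| ≤ B) (hA : 0 ≤ A) :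
    ip (conv γ a) b = Sform γ a b := by
  have hint : Integrable (Function.uncurry fun x y => γ (x - y) * (a y * b x))
      ((volume : Measure (Torus n L)).prod volume) := by
    have := int_key γ hγ ha hb haA hbB hA
    exact this.congr (Filter.Eventually.of_forall fun p => rfl)
  have e : ∀ x, conv γ a x * b x = ∫ y, γ (x - y) * (a y * b x) := by
    intro x
    rw [conv, ← integral_mul_const]
    simp_rw [mul_assoc]
  rw [ip]
  simp_rw [e]
  rw [MeasureTheory.integral_integral hint]
  rfl

lemma Sform_symm (γ : Torus n L → ℝ) (hγeven : ∀ᵐ x, γ (-x) = γ x)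
    (a b : Torus n L → ℝ) : Sform γ a b = Sform γ b a := by
  rw [Sform, Sform, ← MeasureTheory.integral_prod_swap
    (fun p : Torus n L × Torus n L => γ (p.1 - p.2) * (a p.2 * b p.1))]
  have h2 : Measure.QuasiMeasurePreserving (fun p : Torus n L × Torus n L => p.1 - p.2)
      ((volume : Measure (Torus n L)).prod volume) volume :=
    quasiMeasurePreserving_sub volume volume
  have heq : ∀ᵐ p ∂((volume : Measure (Torus n L)).prod volume), γ (-(p.1 - p.2)) = γ (p.1 - p.2) :=
    h2.ae hγeven
  refine integral_congr_ae ?_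
  filter_upwards [heq] with p hp
  show γ (p.swap.1 - p.swap.2) * (a p.swap.2 * b p.swap.1) = γ (p.1 - p.2) * (b p.2 * a p.1)
  have h3 : p.swap.1 - p.swap.2 = -(p.1 - p.2) := by simp [neg_sub]
  rw [h3, hp]
  show γ (p.1 - p.2) * (a p.1 * b p.2) = γ (p.1 - p.2) * (b p.2 * a p.1)
  ring

lemma Sform_sub_left (γ : Torus n L → ℝ) (hγ : Integrable γ) {a a' b : Torus n L → ℝ} {A A' B : ℝ}
    (ha : AEStronglyMeasurable a volume) (ha' : AEStronglyMeasurable a' volume)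
    (hb : AEStronglyMeasurable b volume)
    (haA : ∀ᵐ x, |a x| ≤ A) (ha'A' : ∀ᵐ x, |a' x| ≤ A') (hbB : ∀ᵐ x, |b x| ≤ B)
    (hA : 0 ≤ A) (hA' : 0 ≤ A') :
    Sform γ (a - a') b = Sform γ a b - Sform γ a' b := by
  rw [Sform, Sform, Sform,
    ← integral_sub (int_key γ hγ ha hb haA hbB hA) (int_key γ hγ ha' hb ha'A' hbB hA')]
  refine integral_congr_ae (Filter.Eventually.of_forall fun p => ?_)
  simp only [Pi.sub_apply]
  ring

lemma Sform_sub_right (γ : Torus n L → ℝ) (hγ : Integrable γ) {a b b' : Torus n L → ℝ} {A B B' : ℝ}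
    (ha : AEStronglyMeasurable a volume) (hb : AEStronglyMeasurable b volume)
    (hb' : AEStronglyMeasurable b' volume)
    (haA : ∀ᵐ x, |a x| ≤ A) (hbB : ∀ᵐ x, |b x| ≤ B) (hb'B' : ∀ᵐ x, |b' x| ≤ B')
    (hA : 0 ≤ A) :
    Sform γ a (b - b') = Sform γ a b - Sform γ a b' := by
  rw [Sform, Sform, Sform,
    ← integral_sub (int_key γ hγ ha hb haA hbB hA) (int_key γ hγ ha hb' haA hb'B' hA)]
  refine integral_congr_ae (Filter.Eventually.of_forall fun p => ?_)
  simp only [Pi.sub_apply]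
  ring

/-- **Upper bound of the energy by the second-order objective, obstacle potential case**
(Proposition 3.2, first part): if `γ ∈ L¹` is even and positive semidefinite and `ξτ < 2`,
then `E(u) ≤ J²(u)` for every `u ∈ K = {w ∈ L² : |w| ≤ 1 a.e.}`. -/
theorem energy_le_objJ2_obstacle
    {n : ℕ} (hn : 1 ≤ n) {L : Fin n → ℝ} [∀ i, Fact (0 < L i)]
    (γ : Torus n L → ℝ) (hγL1 : Integrable γ)
    (hγeven : ∀ᵐ x, γ (-x) = γ x)
    (hγpsd : ∀ w : Torus n L → ℝ, MemLp w 2 → 0 ≤ ip (conv γ w) w)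
    (τ : ℝ) (hτ : 0 < τ) (ξ : ℝ) (hξ : 0 ≤ ξ) (hξτ : ξ * τ < 2) (c : ℝ)
    (v : Torus n L → ℝ) (hv : v ∈ obstacleSet n L) :
    ∀ u ∈ obstacleSet n L, energyObs γ ξ c u ≤ objJ2 γ τ ξ c v u := by
  intro u hu
  obtain ⟨hu2, hub⟩ := hu
  obtain ⟨hv2, hvb⟩ := hv
  have hau : AEStronglyMeasurable u volume := hu2.1
  have hav : AEStronglyMeasurable v volume := hv2.1
  have hw2 : MemLp (u - v) 2 := hu2.sub hv2
  have haw : AEStronglyMeasurable (u - v) volume := hw2.1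
  have hwb : ∀ᵐ x, |(u - v) x| ≤ 2 := by
    filter_upwards [hub, hvb] with x h1 h2
    simp only [Pi.sub_apply]
    calc |u x - v x| ≤ |u x| + |v x| := abs_sub _ _
      _ ≤ 2 := by linarith
  have h01 : (0:ℝ) ≤ 1 := by norm_num
  have h02 : (0:ℝ) ≤ 2 := by norm_num
  -- ip products integrable
  have tuu := torus_int_mul hau hau hub hub h01
  have tuv := torus_int_mul hau hav hub hvb h01
  have tvv := torus_int_mul hav hav hvb hvb h01
  -- ip expansions
  have hip_w : ip (u - v) (u - v) = ip u u - 2 * ip u v + ip v v := by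
    rw [ip, ip, ip, ip]
    have t1 : Integrable (fun x => u x * u x - 2 * (u x * v x)) :=
      tuu.sub (tuv.const_mul 2)
    have h1 : ∫ x, (u - v) x * (u - v) x
        = ∫ x, (u x * u x - 2 * (u x * v x) + v x * v x) := by
      refine integral_congr_ae (Filter.Eventually.of_forall fun x => ?_)
      simp only [Pi.sub_apply]; ring
    rw [h1, integral_add t1 tvv, integral_sub tuu (tuv.const_mul 2), integral_const_mul]
  have hip_vu : ip v u = ip u v := by
    rw [ip, ip]
    exact integral_congr_ae (Filter.Eventually.of_forall fun x => mul_comm _ _)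
  have hip_v : ip v (u - v) = ip u v - ip v v := by
    rw [ip, ip, ip]
    calc ∫ x, v x * (u - v) x
        = ∫ x, (u x * v x - v x * v x) := by
          refine integral_congr_ae (Filter.Eventually.of_forall fun x => ?_)
          simp only [Pi.sub_apply]; ring
      _ = (∫ x, u x * v x) - ∫ x, v x * v x := integral_sub tuv tvv
  -- conv expansions via Sform
  have huu : ip (conv γ u) u = Sform γ u u := ip_conv_eq γ hγL1 hau hau hub hub h01
  have hvv : ip (conv γ v) v = Sform γ v v := ip_conv_eq γ hγL1 hav hav hvb hvb h01
  have hvw : ip (conv γ v) (u - v) = Sform γ v u - Sform γ v v := by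
    rw [ip_conv_eq γ hγL1 hav haw hvb hwb h01,
      Sform_sub_right γ hγL1 hav hau hav hvb hub hvb h01]
  have hww : ip (conv γ (u - v)) (u - v)
      = Sform γ u u - 2 * Sform γ v u + Sform γ v v := by
    rw [ip_conv_eq γ hγL1 haw haw hwb hwb h02,
      Sform_sub_left γ hγL1 hau hav haw hub hvb hwb h01 h01,
      Sform_sub_right γ hγL1 hau hau hav hub hub hvb h01,
      Sform_sub_right γ hγL1 hav hau hav hvb hub hvb h01,
      Sform_symm γ hγeven u v]
    ring
  have hP : 0 ≤ Sform γ u u - 2 * Sform γ v u + Sform γ v v := by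
    have := hγpsd (u - v) hw2
    rwa [hww] at this
  have hQ : 0 ≤ ip u u - 2 * ip u v + ip v v := by
    have : 0 ≤ ip (u - v) (u - v) := integral_nonneg fun x => mul_self_nonneg _
    rwa [hip_w] at this
  have hcoef : 0 ≤ 1 / (2 * τ) - ξ / 4 := by
    rw [sub_nonneg, div_le_div_iff₀ (by norm_num) (by linarith)]
    nlinarith
  have hmain := mul_nonneg hcoef hQ
  have key : objJ2 γ τ ξ c v u - energyObs γ ξ c u
      = (1 / (2 * τ) - ξ / 4) * (ip u u - 2 * ip u v + ip v v)
        + 1 / 4 * (Sform γ u u - 2 * Sform γ v u + Sform γ v v) := by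
    simp only [objJ2, energyObs, gfun, ffun]
    rw [hip_w, hip_v, huu, hvv, hvw]
    field_simp
    ring
  linarith [key, hmain, hP]


end
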